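/- arXiv:1801.05294 — 2 statements merged into one kernel-verified Lean document; each statement's English description precedes it below -/
import Mathlib

section
/- Cross-components of the decompositions of two distributed binary-block-encoders are orthogonal: for a pair of discrete memoryless sources (X^n, Y^n) and Boolean functions e : 𝒳^n → {0,1} and f : 𝒴^n → {0,1} with decompositions (ẽ_i) and (f̃_j), for every pair of distinct binary vectors i ≠ j in {0,1}^n one has E[ẽ_i(X^n) · f̃_j(Y^n)] = 0. -/
/-! Choose a coordinate `k` lying in exactly one of `S` and `T`, say `k ∈ S \ T`.
Averaging `ẽ_S` over the `k`-th letter alone gives zero, by strong induction on `S`: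
averaging turns `E[ẽ | X_S]` into `E[ẽ | X_{S∖k}]`, kills the components `ẽ_U` with
`k ∈ U ⊂ S` and leaves the others alone, so what remains is
`E[ẽ | X_{S∖k}] - ∑_{U ⊆ S∖k} ẽ_U = 0`. Since `f̃_T` does not depend on the `k`-th letter
and the pairs `(X_i, Y_i)` are independent, integrating out `(X_k, Y_k)` first makes the
cross moment vanish. -/

open Finset

noncomputable section

namespace BBE

variable {𝒳 𝒴 : Type*} [Fintype 𝒳] [Fintype 𝒴] [DecidableEq 𝒳] [DecidableEq 𝒴]

/-- Expectation under the `n`-fold product of the pmf `PX` on `𝒳`. -/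
def EX {n : ℕ} (PX : 𝒳 → ℝ) (g : (Fin n → 𝒳) → ℝ) : ℝ :=
  ∑ x : Fin n → 𝒳, (∏ i, PX (x i)) * g x

/-- Joint expectation under the `n`-fold product of the joint pmf `PXY` on `𝒳 × 𝒴`. -/
def EJ {n : ℕ} (PXY : 𝒳 × 𝒴 → ℝ) (g : (Fin n → 𝒳) → (Fin n → 𝒴) → ℝ) : ℝ :=
  ∑ ω : Fin n → 𝒳 × 𝒴, (∏ i, PXY (ω i)) * g (fun i => (ω i).1) (fun i => (ω i).2)

def margX (PXY : 𝒳 × 𝒴 → ℝ) (x : 𝒳) : ℝ := ∑ y, PXY (x, y)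

def margY (PXY : 𝒳 × 𝒴 → ℝ) (y : 𝒴) : ℝ := ∑ x, PXY (x, y)

/-- The centered real-valued version `ẽ` of a Boolean function `e`. -/
def centered {n : ℕ} (PX : 𝒳 → ℝ) (e : (Fin n → 𝒳) → Bool) (x : Fin n → 𝒳) : ℝ :=
  (if e x then (1 : ℝ) else 0) - EX PX (fun x' => if e x' then (1 : ℝ) else 0)

/-- Conditional expectation `E[g(Xⁿ) | X_S = x_S]` under the product pmf. -/
def condExp {n : ℕ} (PX : 𝒳 → ℝ) (g : (Fin n → 𝒳) → ℝ) (S : Finset (Fin n))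
    (x : Fin n → 𝒳) : ℝ :=
  ∑ x' : Fin n → 𝒳,
    (∏ i, if i ∈ S then (if x' i = x i then (1 : ℝ) else 0) else PX (x' i)) * g x'

/-- The component `g_S` of the decomposition, defined recursively by
`g_S = E[g | X_S] - ∑_{T ⊂ S} g_T`. -/
def comp {n : ℕ} (PX : 𝒳 → ℝ) (g : (Fin n → 𝒳) → ℝ) (S : Finset (Fin n))
    (x : Fin n → 𝒳) : ℝ :=
  condExp PX g S x - ∑ T ∈ (S.powerset.erase S).attach, comp PX g T.1 x
termination_by S.card
decreasing_by
  obtain ⟨T, hT⟩ := T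
  simp only [Finset.mem_erase, Finset.mem_powerset] at hT
  exact Finset.card_lt_card (lt_of_le_of_ne (Finset.le_iff_subset.mpr hT.2) hT.1)

/-- Variance under the product pmf. -/
def varX {n : ℕ} (PX : 𝒳 → ℝ) (g : (Fin n → 𝒳) → ℝ) : ℝ :=
  EX PX (fun x => (g x - EX PX g) ^ 2)

/-- The set of correlations `E[h(X)·g(Y)]` over zero-mean unit-variance single-letter
functions; its supremum is the maximal correlation. -/
def corrSet (PXY : 𝒳 × 𝒴 → ℝ) : Set ℝ :=
  {r | ∃ h : 𝒳 → ℝ, ∃ g : 𝒴 → ℝ,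
    (∑ x, margX PXY x * h x) = 0 ∧ (∑ y, margY PXY y * g y) = 0 ∧
    (∑ x, margX PXY x * h x ^ 2) = 1 ∧ (∑ y, margY PXY y * g y ^ 2) = 1 ∧
    r = ∑ p : 𝒳 × 𝒴, PXY p * (h p.1 * g p.2)}

section Decomposition

variable {n : ℕ} (PX : 𝒳 → ℝ) (g : (Fin n → 𝒳) → ℝ)

theorem comp_eq_condExp_sub (S : Finset (Fin n)) (x : Fin n → 𝒳) :
    comp PX g S x = condExp PX g S x - ∑ T ∈ S.ssubsets, comp PX g T x := by
  rw [comp]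
  exact congrArg _ (sum_attach _ fun T => comp PX g T x)

theorem sum_powerset_comp (S : Finset (Fin n)) (x : Fin n → 𝒳) :
    ∑ T ∈ S.powerset, comp PX g T x = condExp PX g S x := by
  rw [← insert_erase (mem_powerset_self S),
    sum_insert (notMem_erase _ _), comp_eq_condExp_sub]
  exact sub_add_cancel _ _

theorem condExp_congr (S : Finset (Fin n)) {x x' : Fin n → 𝒳} (h : ∀ i ∈ S, x i = x' i) :
    condExp PX g S x = condExp PX g S x' := by
  unfold condExp
  refine sum_congr rfl fun z _ => congrArg (· * g z) (prod_congr rfl fun i _ => ?_)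
  by_cases hi : i ∈ S
  · simp only [hi, if_true, h i hi]
  · simp only [hi, if_false]

theorem comp_congr (S : Finset (Fin n)) {x x' : Fin n → 𝒳} (h : ∀ i ∈ S, x i = x' i) :
    comp PX g S x = comp PX g S x' := by
  induction S using strongInduction with
  | H S ih =>
    rw [comp_eq_condExp_sub, comp_eq_condExp_sub, condExp_congr PX g S h]
    congr 1
    refine sum_congr rfl fun T hT => ?_
    have hTS := mem_ssubsets.mp hT
    exact ih T hTS fun i hi => h i (hTS.subset hi)

theorem comp_update_of_notMem {S : Finset (Fin n)} {k : Fin n} (hk : k ∉ S) (x : Fin n → 𝒳)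
    (v : 𝒳) : comp PX g S (Function.update x k v) = comp PX g S x :=
  comp_congr PX g S fun _ hi => Function.update_of_ne (ne_of_mem_of_not_mem hi hk) v x

theorem sum_mul_prod_update {S : Finset (Fin n)} {k : Fin n} (hk : k ∈ S)
    (x x' : Fin n → 𝒳) :
    ∑ v, PX v * ∏ i, (if i ∈ S then (if x' i = Function.update x k v i then (1 : ℝ) else 0)
      else PX (x' i)) =
    ∏ i, (if i ∈ S.erase k then (if x' i = x i then (1 : ℝ) else 0) else PX (x' i)) := by
  have hrest : ∀ v, ∀ i : {i // i ≠ k},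
      (if ↑i ∈ S then (if x' i = Function.update x k v i then (1 : ℝ) else 0)
        else PX (x' i)) =
      (if ↑i ∈ S.erase k then (if x' i = x i then (1 : ℝ) else 0) else PX (x' i)) := by
    intro v i
    simp only [Function.update_of_ne i.2, mem_erase, i.2, ne_eq, not_false_eq_true,
      true_and]
  simp only [Fintype.prod_eq_mul_prod_subtype_ne _ k, hrest, if_pos hk, Function.update_self,
    notMem_erase, if_false, ← mul_assoc, mul_ite, mul_one, mul_zero, ← sum_mul,
    sum_ite_eq, mem_univ, if_true]

theorem sum_mul_condExp_update {S : Finset (Fin n)} {k : Fin n} (hk : k ∈ S)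
    (x : Fin n → 𝒳) :
    ∑ v, PX v * condExp PX g S (Function.update x k v) = condExp PX g (S.erase k) x := by
  unfold condExp
  simp only [mul_sum, ← mul_assoc]
  rw [sum_comm]
  refine sum_congr rfl fun x' _ => ?_
  rw [← sum_mul, sum_mul_prod_update PX hk]

variable {PX}

theorem sum_mul_comp_update_of_notMem (hPX : ∑ v, PX v = 1) {S : Finset (Fin n)} {k : Fin n}
    (hk : k ∉ S) (x : Fin n → 𝒳) :
    ∑ v, PX v * comp PX g S (Function.update x k v) = comp PX g S x := by
  simp only [comp_update_of_notMem PX g hk, ← sum_mul, hPX, one_mul]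

theorem sum_mul_comp_update_eq_zero (hPX : ∑ v, PX v = 1) {S : Finset (Fin n)} {k : Fin n}
    (hk : k ∈ S) (x : Fin n → 𝒳) :
    ∑ v, PX v * comp PX g S (Function.update x k v) = 0 := by
  induction S using strongInduction with
  | H S ih =>
    calc ∑ v, PX v * comp PX g S (Function.update x k v)
        = condExp PX g (S.erase k) x -
            ∑ T ∈ S.ssubsets, ∑ v, PX v * comp PX g T (Function.update x k v) := by
          simp only [comp_eq_condExp_sub PX g S, mul_sub, sum_sub_distrib,
            sum_mul_condExp_update PX g hk, mul_sum]
          rw [sum_comm]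
      _ = condExp PX g (S.erase k) x - ∑ T ∈ (S.erase k).powerset, comp PX g T x := by
          congr 1
          symm
          refine sum_subset_zero_on_sdiff ?_ (fun T hT => ?_) (fun T hT => ?_)
          · exact fun T hT => mem_ssubsets.mpr
              ((mem_powerset.mp hT).trans_ssubset (erase_ssubset hk))
          · rw [mem_sdiff, mem_ssubsets, mem_powerset, subset_erase] at hT
            exact ih T hT.1 (by_contra fun hkT => hT.2 ⟨hT.1.subset, hkT⟩)
          · have hkT : k ∉ T := (subset_erase.mp (mem_powerset.mp hT)).2
            exact (sum_mul_comp_update_of_notMem g hPX hkT x).symm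
      _ = 0 := by rw [sum_powerset_comp, sub_self]

end Decomposition

theorem sum_prod_mul_eq_zero_of_sum_mul_update {β : Type*} [Fintype β] {n : ℕ} (P : β → ℝ)
    (G : (Fin n → β) → ℝ) (k : Fin n)
    (h : ∀ ω, ∑ p, P p * G (Function.update ω k p) = 0) :
    ∑ ω : Fin n → β, (∏ i, P (ω i)) * G ω = 0 := by
  cases n with
  | zero => exact k.elim0
  | succ m =>
    rw [← (Fin.insertNthEquiv (fun _ => β) k).sum_comp, Fintype.sum_prod_type, sum_comm]
    refine sum_eq_zero fun ω' _ => ?_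
    rcases isEmpty_or_nonempty β with hβ | ⟨⟨p₀⟩⟩
    · simp
    calc ∑ p, (∏ i, P (Fin.insertNth k p ω' i)) * G (Fin.insertNth k p ω')
        = (∏ i, P (ω' i)) * ∑ p, P p * G (Function.update (Fin.insertNth k p₀ ω') k p) := by
          simp [Fin.prod_univ_succAbove _ k, mul_sum, mul_assoc, mul_left_comm]
      _ = 0 := by rw [h, mul_zero]

section JointExpectation

omit [DecidableEq 𝒳] [DecidableEq 𝒴]

variable {n : ℕ} (PXY : 𝒳 × 𝒴 → ℝ)

theorem sum_margX : ∑ x, margX PXY x = ∑ p, PXY p :=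
  (Fintype.sum_prod_type PXY).symm

theorem sum_margY : ∑ y, margY PXY y = ∑ p, PXY p :=
  (Fintype.sum_prod_type_right PXY).symm

theorem EJ_eq_zero_of_sum_mul_update (G : (Fin n → 𝒳) → (Fin n → 𝒴) → ℝ) (k : Fin n)
    (h : ∀ x y, ∑ p, PXY p * G (Function.update x k p.1) (Function.update y k p.2) = 0) :
    EJ PXY G = 0 :=
  sum_prod_mul_eq_zero_of_sum_mul_update PXY _ k fun ω => by
    have h' := h (Prod.fst ∘ ω) (Prod.snd ∘ ω)
    simp only [← Function.comp_update] at h'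
    exact h'

variable {PXY} {a : (Fin n → 𝒳) → ℝ} {b : (Fin n → 𝒴) → ℝ} {k : Fin n}

theorem EJ_mul_eq_zero_of_left (ha : ∀ x, ∑ v, margX PXY v * a (Function.update x k v) = 0)
    (hb : ∀ y w, b (Function.update y k w) = b y) :
    EJ PXY (fun x y => a x * b y) = 0 :=
  EJ_eq_zero_of_sum_mul_update PXY _ k fun x y => by
    simp only [hb, ← mul_assoc, ← sum_mul, Fintype.sum_prod_type]
    exact mul_eq_zero_of_left (ha x) _

theorem EJ_mul_eq_zero_of_right (ha : ∀ x v, a (Function.update x k v) = a x)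
    (hb : ∀ y, ∑ w, margY PXY w * b (Function.update y k w) = 0) :
    EJ PXY (fun x y => a x * b y) = 0 :=
  EJ_eq_zero_of_sum_mul_update PXY _ k fun x y => by
    simp only [ha, mul_left_comm _ (a x), ← mul_sum, Fintype.sum_prod_type_right,
      ← sum_mul]
    exact mul_eq_zero_of_right _ (hb y)

end JointExpectation

theorem cross_components_orthogonal_general
    {𝒳 𝒴 : Type*} [Fintype 𝒳] [Fintype 𝒴] [DecidableEq 𝒳] [DecidableEq 𝒴]
    {n : ℕ} (PXY : 𝒳 × 𝒴 → ℝ)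
    (hsum : ∑ p : 𝒳 × 𝒴, PXY p = 1)
    (e : (Fin n → 𝒳) → Bool) (f : (Fin n → 𝒴) → Bool)
    (S T : Finset (Fin n)) (hST : S ≠ T) :
    EJ PXY (fun x y => comp (margX PXY) (centered (margX PXY) e) S x *
      comp (margY PXY) (centered (margY PXY) f) T y) = 0 := by
  obtain ⟨k, hk⟩ := symmDiff_nonempty.mpr hST
  rcases mem_symmDiff.mp hk with ⟨hkS, hkT⟩ | ⟨hkT, hkS⟩
  · exact EJ_mul_eq_zero_of_left
      (sum_mul_comp_update_eq_zero _ (by rw [sum_margX, hsum]) hkS)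
      (comp_update_of_notMem _ _ hkT)
  · exact EJ_mul_eq_zero_of_right
      (comp_update_of_notMem _ _ hkS)
      (sum_mul_comp_update_eq_zero _ (by rw [sum_margY, hsum]) hkT)

/-- cross-components of the decompositions of two distributed
binary-block-encoders applied to a pair of DMS's are orthogonal. -/
theorem cross_components_orthogonal
    {𝒳 𝒴 : Type*} [Fintype 𝒳] [Fintype 𝒴] [DecidableEq 𝒳] [DecidableEq 𝒴]
    {n : ℕ} (PXY : 𝒳 × 𝒴 → ℝ)
    (hnn : ∀ p, 0 ≤ PXY p) (hsum : ∑ p : 𝒳 × 𝒴, PXY p = 1)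
    (e : (Fin n → 𝒳) → Bool) (f : (Fin n → 𝒴) → Bool)
    (S T : Finset (Fin n)) (hST : S ≠ T) :
    EJ PXY (fun x y => comp (margX PXY) (centered (margX PXY) e) S x *
      comp (margY PXY) (centered (margY PXY) f) T y) = 0 :=
  cross_components_orthogonal_general PXY hsum e f S T hST

end BBE
end
end

section
/- Maximal correlation tensorizes over the components of the decomposition: for a pair of discrete memoryless sources (X^n, Y^n) with maximal correlation ψ, Boolean functions e : 𝒳^n → {0,1} and f : 𝒴^n → {0,1} with decompositions (ẽ_i), (f̃_i) and dependency spectra P_i := Var(ẽ_i), Q_i := Var(f̃_i), one has for every binary vector i ∈ {0,1}^n: |E[ẽ_i(X^n) · f̃_i(Y^n)]| ≤ ψ^{w_H(i)} · √(P_i · Q_i), where w_H(i) is the Hamming weight of i. -/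
set_option linter.unusedVariables false
set_option linter.unusedSectionVars false
set_option maxHeartbeats 1000000


open Finset

noncomputable section

namespace BBE

variable {𝒳 𝒴 : Type*} [Fintype 𝒳] [Fintype 𝒴] [DecidableEq 𝒳] [DecidableEq 𝒴]

lemma sum_pi_prod {n : ℕ} (f : Fin n → 𝒳 → ℝ) :
    ∑ x : Fin n → 𝒳, ∏ i, f i (x i) = ∏ i, ∑ c, f i c := by
  rw [Finset.prod_univ_sum, Fintype.piFinset_univ]

/-- merge a value at coordinate k with values elsewhere -/
def merge {n : ℕ} (k : Fin n) (c : 𝒳) (r : {j : Fin n // j ≠ k} → 𝒳) : Fin n → 𝒳 :=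
  fun i => if h : i = k then c else r ⟨i, h⟩

lemma merge_eq_symm {n : ℕ} (k : Fin n) (p : 𝒳 × ({j : Fin n // j ≠ k} → 𝒳)) :
    (Equiv.funSplitAt k 𝒳).symm p = merge k p.1 p.2 := by
  funext i
  simp only [Equiv.funSplitAt_symm_apply, merge]

lemma sum_split {n : ℕ} (k : Fin n) (H : (Fin n → 𝒳) → ℝ) :
    ∑ x : Fin n → 𝒳, H x = ∑ c : 𝒳, ∑ r : {j : Fin n // j ≠ k} → 𝒳, H (merge k c r) := by
  rw [← Equiv.sum_comp (Equiv.funSplitAt k 𝒳).symm H, Fintype.sum_prod_type]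
  exact Finset.sum_congr rfl fun c _ => Finset.sum_congr rfl fun r _ => by
    rw [merge_eq_symm]

lemma update_merge {n : ℕ} (k : Fin n) (c c' : 𝒳) (r : {j : Fin n // j ≠ k} → 𝒳) :
    Function.update (merge k c r) k c' = merge k c' r := by
  funext i
  by_cases h : i = k
  · subst h; simp [merge]
  · simp [Function.update, h, merge]

lemma merge_self {n : ℕ} (k : Fin n) (x : Fin n → 𝒳) :
    merge k (x k) (fun j => x j.1) = x := by
  funext i; by_cases h : i = k <;> simp [merge, h]

lemma merge_apply_ne {n : ℕ} (k : Fin n) (c : 𝒳) (r : {j : Fin n // j ≠ k} → 𝒳)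
    {i : Fin n} (h : i ≠ k) : merge k c r i = r ⟨i, h⟩ := by
  simp [merge, h]

lemma prod_merge {n : ℕ} (k : Fin n) (c : 𝒳) (r : {j : Fin n // j ≠ k} → 𝒳) (w : Fin n → 𝒳 → ℝ) :
    ∏ i, w i (merge k c r i) = w k c * ∏ j : {j : Fin n // j ≠ k}, w j.1 (r j) := by
  rw [Fintype.prod_eq_mul_prod_compl k]
  simp only [merge, dif_pos]
  congr 1
  rw [Finset.prod_subtype ({k}ᶜ : Finset (Fin n)) (p := fun j => j ≠ k) (by simp)]
  exact Finset.prod_congr rfl fun j _ => by simp [j.2]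

def Ak {n : ℕ} (PX : 𝒳 → ℝ) (k : Fin n) (h : (Fin n → 𝒳) → ℝ) (x : Fin n → 𝒳) : ℝ :=
  ∑ c, PX c * h (Function.update x k c)

def DepOn {n : ℕ} (a : (Fin n → 𝒳) → ℝ) (S : Finset (Fin n)) : Prop :=
  ∀ x y, (∀ i ∈ S, x i = y i) → a x = a y

-- linearity
lemma EX_sum {n : ℕ} (PX : 𝒳 → ℝ) {ι : Type*} (s : Finset ι) (g : ι → (Fin n → 𝒳) → ℝ) :
    EX PX (fun x => ∑ j ∈ s, g j x) = ∑ j ∈ s, EX PX (g j) := by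
  unfold EX
  rw [Finset.sum_comm]
  exact Finset.sum_congr rfl fun x _ => by rw [Finset.mul_sum]

lemma EX_const {n : ℕ} (PX : 𝒳 → ℝ) (hw1 : ∑ c, PX c = 1) (t : ℝ) :
    EX (n := n) PX (fun _ => t) = t := by
  unfold EX
  rw [← Finset.sum_mul, sum_pi_prod (f := fun _ c => PX c)]
  simp [hw1]

lemma EX_sub_const {n : ℕ} (PX : 𝒳 → ℝ) (hw1 : ∑ c, PX c = 1) (g : (Fin n → 𝒳) → ℝ) (t : ℝ) :
    EX PX (fun x => g x - t) = EX PX g - t := by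
  unfold EX
  simp only [mul_sub]
  rw [Finset.sum_sub_distrib, ← Finset.sum_mul, sum_pi_prod (f := fun _ c => PX c)]
  simp [hw1]

lemma EX_Ak {n : ℕ} (PX : 𝒳 → ℝ) (hw1 : ∑ c, PX c = 1) (k : Fin n) (h : (Fin n → 𝒳) → ℝ) :
    EX PX (Ak PX k h) = EX PX h := by
  unfold EX Ak
  rw [sum_split k, sum_split k (fun x => (∏ i, PX (x i)) * h x)]
  have key : ∀ r : {j : Fin n // j ≠ k} → 𝒳, ∀ c : 𝒳,
      (∏ i, PX (merge k c r i)) * ∑ c', PX c' * h (Function.update (merge k c r) k c')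
      = PX c * ((∏ j : {j : Fin n // j ≠ k}, PX (r j)) *
          ∑ c', PX c' * h (merge k c' r)) := by
    intro r c
    rw [prod_merge k c r (fun _ => PX)]
    simp only [update_merge]
    ring
  calc ∑ c, ∑ r, (∏ i, PX (merge k c r i)) * ∑ c', PX c' * h (Function.update (merge k c r) k c')
      = ∑ c, PX c * ∑ r : {j : Fin n // j ≠ k} → 𝒳, ((∏ j : {j : Fin n // j ≠ k}, PX (r j)) *
          ∑ c', PX c' * h (merge k c' r)) := by
        exact Finset.sum_congr rfl fun c _ => by
          rw [Finset.mul_sum]; exact Finset.sum_congr rfl fun r _ => key r c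
    _ = ∑ r : {j : Fin n // j ≠ k} → 𝒳, ((∏ j : {j : Fin n // j ≠ k}, PX (r j)) *
          ∑ c', PX c' * h (merge k c' r)) := by rw [← Finset.sum_mul, hw1, one_mul]
    _ = ∑ c', ∑ r : {j : Fin n // j ≠ k} → 𝒳, (∏ i, PX (merge k c' r i)) * h (merge k c' r) := by
        rw [Finset.sum_comm]
        exact Finset.sum_congr rfl fun r _ => by
          rw [Finset.mul_sum]
          exact Finset.sum_congr rfl fun c' _ => by
            rw [prod_merge k c' r (fun _ => PX)]; ring
def AJ {n : ℕ} (PXY : 𝒳 × 𝒴 → ℝ) (k : Fin n) (h : (Fin n → 𝒳) → (Fin n → 𝒴) → ℝ)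
    (x : Fin n → 𝒳) (y : Fin n → 𝒴) : ℝ :=
  ∑ p : 𝒳 × 𝒴, PXY p * h (Function.update x k p.1) (Function.update y k p.2)

lemma EJ_sum {n : ℕ} (PXY : 𝒳 × 𝒴 → ℝ) {ι : Type*} (s : Finset ι)
    (g : ι → (Fin n → 𝒳) → (Fin n → 𝒴) → ℝ) :
    EJ PXY (fun x y => ∑ j ∈ s, g j x y) = ∑ j ∈ s, EJ PXY (g j) := by
  unfold EJ
  rw [Finset.sum_comm]
  exact Finset.sum_congr rfl fun x _ => by rw [Finset.mul_sum]

lemma mergeFst {n : ℕ} (k : Fin n) (p : 𝒳 × 𝒴) (r : {j : Fin n // j ≠ k} → 𝒳 × 𝒴) :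
    (fun i => (merge k p r i).1) = merge k p.1 (fun j => (r j).1) := by
  funext i; by_cases h : i = k <;> simp [merge, h]

lemma mergeSnd {n : ℕ} (k : Fin n) (p : 𝒳 × 𝒴) (r : {j : Fin n // j ≠ k} → 𝒳 × 𝒴) :
    (fun i => (merge k p r i).2) = merge k p.2 (fun j => (r j).2) := by
  funext i; by_cases h : i = k <;> simp [merge, h]

lemma EJ_AJ {n : ℕ} (PXY : 𝒳 × 𝒴 → ℝ) (hw1 : ∑ p : 𝒳 × 𝒴, PXY p = 1) (k : Fin n)
    (h : (Fin n → 𝒳) → (Fin n → 𝒴) → ℝ) :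
    EJ PXY (AJ PXY k h) = EJ PXY h := by
  unfold EJ AJ
  rw [sum_split k, sum_split k
    (fun ω : Fin n → 𝒳 × 𝒴 => (∏ i, PXY (ω i)) * h (fun i => (ω i).1) (fun i => (ω i).2))]
  have key : ∀ (r : {j : Fin n // j ≠ k} → 𝒳 × 𝒴) (q : 𝒳 × 𝒴),
      (∏ i, PXY (merge k q r i)) *
        ∑ p : 𝒳 × 𝒴, PXY p * h (Function.update (fun i => (merge k q r i).1) k p.1)
          (Function.update (fun i => (merge k q r i).2) k p.2)
      = PXY q * ((∏ j : {j : Fin n // j ≠ k}, PXY (r j)) *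
          ∑ p : 𝒳 × 𝒴, PXY p * h (merge k p.1 (fun j => (r j).1)) (merge k p.2 (fun j => (r j).2))) := by
    intro r q
    rw [prod_merge k q r (fun _ => PXY)]
    rw [mergeFst, mergeSnd]
    simp only [update_merge]
    ring
  calc ∑ q : 𝒳 × 𝒴, ∑ r, (∏ i, PXY (merge k q r i)) *
        ∑ p : 𝒳 × 𝒴, PXY p * h (Function.update (fun i => (merge k q r i).1) k p.1)
          (Function.update (fun i => (merge k q r i).2) k p.2)
      = ∑ q : 𝒳 × 𝒴, PXY q * ∑ r : {j : Fin n // j ≠ k} → 𝒳 × 𝒴,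
          ((∏ j : {j : Fin n // j ≠ k}, PXY (r j)) *
          ∑ p : 𝒳 × 𝒴, PXY p * h (merge k p.1 (fun j => (r j).1)) (merge k p.2 (fun j => (r j).2))) := by
        exact Finset.sum_congr rfl fun q _ => by
          rw [Finset.mul_sum]; exact Finset.sum_congr rfl fun r _ => key r q
    _ = ∑ r : {j : Fin n // j ≠ k} → 𝒳 × 𝒴, ((∏ j : {j : Fin n // j ≠ k}, PXY (r j)) *
          ∑ p : 𝒳 × 𝒴, PXY p * h (merge k p.1 (fun j => (r j).1)) (merge k p.2 (fun j => (r j).2))) := by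
        rw [← Finset.sum_mul, hw1, one_mul]
    _ = ∑ p : 𝒳 × 𝒴, ∑ r : {j : Fin n // j ≠ k} → 𝒳 × 𝒴, (∏ i, PXY (merge k p r i)) *
          h (fun i => (merge k p r i).1) (fun i => (merge k p r i).2) := by
        rw [Finset.sum_comm]
        exact Finset.sum_congr rfl fun r _ => by
          rw [Finset.mul_sum]
          exact Finset.sum_congr rfl fun p _ => by
            rw [prod_merge k p r (fun _ => PXY), mergeFst, mergeSnd]; ring
lemma comp_eq {n : ℕ} (PX : 𝒳 → ℝ) (g : (Fin n → 𝒳) → ℝ) (S : Finset (Fin n)) (x : Fin n → 𝒳) :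
    comp PX g S x = condExp PX g S x - ∑ T ∈ S.powerset.erase S, comp PX g T x := by
  rw [comp, ← Finset.sum_attach (S.powerset.erase S) (fun T => comp PX g T x)]

lemma condExp_empty {n : ℕ} (PX : 𝒳 → ℝ) (g : (Fin n → 𝒳) → ℝ) (x : Fin n → 𝒳) :
    condExp PX g ∅ x = EX PX g := by
  simp [condExp, EX]

lemma comp_empty {n : ℕ} (PX : 𝒳 → ℝ) (g : (Fin n → 𝒳) → ℝ) (x : Fin n → 𝒳) :
    comp PX g ∅ x = EX PX g := by
  rw [comp_eq]
  simp [condExp_empty]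

lemma condExp_depOn {n : ℕ} (PX : 𝒳 → ℝ) (g : (Fin n → 𝒳) → ℝ) (S : Finset (Fin n)) :
    DepOn (condExp PX g S) S := by
  intro x y hxy
  unfold condExp
  refine Finset.sum_congr rfl fun x' _ => ?_
  congr 1
  refine Finset.prod_congr rfl fun i _ => ?_
  by_cases h : i ∈ S
  · simp [h, hxy i h]
  · simp [h]

lemma comp_depOn {n : ℕ} (PX : 𝒳 → ℝ) (g : (Fin n → 𝒳) → ℝ) (S : Finset (Fin n)) :
    DepOn (comp PX g S) S := by
  induction S using Finset.strongInduction with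
  | _ S ih =>
    intro x y hxy
    rw [comp_eq, comp_eq]
    have h1 : condExp PX g S x = condExp PX g S y := condExp_depOn PX g S x y hxy
    have h2 : ∑ T ∈ S.powerset.erase S, comp PX g T x
        = ∑ T ∈ S.powerset.erase S, comp PX g T y := by
      refine Finset.sum_congr rfl fun T hT => ?_
      simp only [Finset.mem_erase, Finset.mem_powerset] at hT
      exact ih T (lt_of_le_of_ne hT.2 hT.1) x y fun i hi => hxy i (hT.2 hi)
    rw [h1, h2]

lemma Ak_depOn_not_mem {n : ℕ} (PX : 𝒳 → ℝ) (hw1 : ∑ c, PX c = 1) (k : Fin n)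
    {S : Finset (Fin n)} (hk : k ∉ S) {h : (Fin n → 𝒳) → ℝ} (hdep : DepOn h S)
    (x : Fin n → 𝒳) : Ak PX k h x = h x := by
  unfold Ak
  have : ∀ c, h (Function.update x k c) = h x := by
    intro c
    exact hdep _ x fun i hi => Function.update_of_ne (fun he => hk (by rw [← he]; exact hi)) c x
  simp only [this, ← Finset.sum_mul, hw1, one_mul]

lemma Ak_condExp {n : ℕ} (PX : 𝒳 → ℝ) (g : (Fin n → 𝒳) → ℝ) {S : Finset (Fin n)}
    {k : Fin n} (hk : k ∈ S) (x : Fin n → 𝒳) :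
    Ak PX k (condExp PX g S) x = condExp PX g (S.erase k) x := by
  unfold Ak condExp
  simp only [Finset.mul_sum]
  rw [Finset.sum_comm]
  refine Finset.sum_congr rfl fun x' _ => ?_
  have hassoc : ∀ c : 𝒳, PX c *
      ((∏ i, if i ∈ S then (if x' i = Function.update x k c i then (1:ℝ) else 0) else PX (x' i)) * g x')
      = (PX c * ∏ i, if i ∈ S then (if x' i = Function.update x k c i then (1:ℝ) else 0) else PX (x' i)) * g x' := by
    intro c; ring
  simp only [hassoc]
  rw [← Finset.sum_mul]
  congr 1
  have hprod : ∀ c : 𝒳,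
      (∏ i, if i ∈ S then (if x' i = Function.update x k c i then (1:ℝ) else 0) else PX (x' i))
      = (if x' k = c then (1:ℝ) else 0) *
        ∏ i ∈ ({k}ᶜ : Finset (Fin n)),
          (if i ∈ S then (if x' i = x i then (1:ℝ) else 0) else PX (x' i)) := by
    intro c
    rw [Fintype.prod_eq_mul_prod_compl k]
    simp only [hk, if_true, Function.update_self]
    congr 1
    refine Finset.prod_congr rfl fun i hi => ?_
    have : i ≠ k := by simpa using hi
    rw [Function.update_of_ne this]
  have hR : (∏ i, if i ∈ S.erase k then (if x' i = x i then (1:ℝ) else 0) else PX (x' i))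
      = PX (x' k) * ∏ i ∈ ({k}ᶜ : Finset (Fin n)),
          (if i ∈ S then (if x' i = x i then (1:ℝ) else 0) else PX (x' i)) := by
    rw [Fintype.prod_eq_mul_prod_compl k]
    simp only [Finset.mem_erase, ne_eq, not_true_eq_false, false_and, if_false]
    congr 1
    refine Finset.prod_congr rfl fun i hi => ?_
    have hik : i ≠ k := by simpa using hi
    by_cases hiS : i ∈ S
    · simp [hiS, Finset.mem_erase, hik]
    · simp [hiS, Finset.mem_erase, hik]
  simp only [hprod]
  rw [hR]
  simp [mul_ite, mul_zero, mul_one, ite_mul, zero_mul, one_mul, mul_assoc]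

lemma Ak_comp {n : ℕ} (PX : 𝒳 → ℝ) (hw1 : ∑ c, PX c = 1) (g : (Fin n → 𝒳) → ℝ) :
    ∀ S : Finset (Fin n), ∀ k ∈ S, ∀ x, Ak PX k (comp PX g S) x = 0 := by
  intro S
  induction S using Finset.strongInduction with
  | _ S ih =>
    intro k hk x
    have hlin : Ak PX k (comp PX g S) x
        = Ak PX k (condExp PX g S) x - ∑ T ∈ S.powerset.erase S, Ak PX k (comp PX g T) x := by
      unfold Ak
      simp only [comp_eq PX g S, mul_sub]
      rw [Finset.sum_sub_distrib]
      congr 1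
      rw [Finset.sum_comm]
      exact Finset.sum_congr rfl fun T _ => by rw [Finset.mul_sum]
    rw [hlin, Ak_condExp PX g hk]
    have hsplit : ∑ T ∈ S.powerset.erase S, Ak PX k (comp PX g T) x
        = ∑ T ∈ (S.erase k).powerset, comp PX g T x := by
      rw [← Finset.sum_filter_add_sum_filter_not (S.powerset.erase S) (fun T => k ∈ T)]
      have hz : ∑ T ∈ (S.powerset.erase S).filter (fun T => k ∈ T), Ak PX k (comp PX g T) x = 0 := by
        refine Finset.sum_eq_zero fun T hT => ?_
        simp only [Finset.mem_filter, Finset.mem_erase, Finset.mem_powerset] at hT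
        exact ih T (lt_of_le_of_ne hT.1.2 hT.1.1) k hT.2 x
      rw [hz, zero_add]
      have hset : (S.powerset.erase S).filter (fun T => ¬ k ∈ T) = (S.erase k).powerset := by
        ext T
        simp only [Finset.mem_filter, Finset.mem_erase, Finset.mem_powerset]
        constructor
        · rintro ⟨⟨hTS, hsub⟩, hkT⟩
          intro i hi
          exact Finset.mem_erase.mpr ⟨fun he => hkT (he ▸ hi), hsub hi⟩
        · intro hsub
          have hTS : T ⊆ S := hsub.trans (Finset.erase_subset k S)
          have hkT : k ∉ T := fun hkT => (Finset.mem_erase.mp (hsub hkT)).1 rfl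
          exact ⟨⟨fun he => hkT (he ▸ hk), hTS⟩, hkT⟩
      rw [hset]
      refine Finset.sum_congr rfl fun T hT => ?_
      simp only [Finset.mem_powerset] at hT
      have hkT : k ∉ T := fun hkT => (Finset.mem_erase.mp (hT hkT)).1 rfl
      exact Ak_depOn_not_mem PX hw1 k hkT (comp_depOn PX g T) x
    rw [hsplit]
    rw [← Finset.add_sum_erase _ _ (Finset.mem_powerset_self (S.erase k))]
    rw [comp_eq PX g (S.erase k)]
    ring
section SingleLetter
variable (PXY : 𝒳 × 𝒴 → ℝ)

lemma margX_nonneg (hnn : ∀ p, 0 ≤ PXY p) (x : 𝒳) : 0 ≤ margX PXY x :=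
  Finset.sum_nonneg fun y _ => hnn (x, y)

lemma margY_nonneg (hnn : ∀ p, 0 ≤ PXY p) (y : 𝒴) : 0 ≤ margY PXY y :=
  Finset.sum_nonneg fun x _ => hnn (x, y)

lemma margX_sum (hsum : ∑ p : 𝒳 × 𝒴, PXY p = 1) : ∑ x, margX PXY x = 1 := by
  rw [← hsum, Fintype.sum_prod_type]; rfl

lemma margY_sum (hsum : ∑ p : 𝒳 × 𝒴, PXY p = 1) : ∑ y, margY PXY y = 1 := by
  rw [← hsum, Fintype.sum_prod_type_right]; rfl

lemma le_margX (hnn : ∀ p, 0 ≤ PXY p) (p : 𝒳 × 𝒴) : PXY p ≤ margX PXY p.1 := by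
  have := Finset.single_le_sum (f := fun y => PXY (p.1, y)) (fun y _ => hnn _) (Finset.mem_univ p.2)
  simpa [margX] using this

lemma le_margY (hnn : ∀ p, 0 ≤ PXY p) (p : 𝒳 × 𝒴) : PXY p ≤ margY PXY p.2 := by
  have := Finset.single_le_sum (f := fun x => PXY (x, p.2)) (fun x _ => hnn _) (Finset.mem_univ p.1)
  simpa [margY] using this

lemma exists_unit {w : 𝒳 → ℝ} (hnn : ∀ x, 0 ≤ w x) {x₁ x₂ : 𝒳} (hne : x₁ ≠ x₂)
    (h1 : 0 < w x₁) (h2 : 0 < w x₂) :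
    ∃ h : 𝒳 → ℝ, (∑ x, w x * h x) = 0 ∧ (∑ x, w x * h x ^ 2) = 1 := by
  set s := w x₁ + w x₂ with hs
  have hspos : 0 < s := by positivity
  set a := Real.sqrt (w x₂ / (w x₁ * s)) with ha
  set b := Real.sqrt (w x₁ / (w x₂ * s)) with hb
  refine ⟨fun x => (if x = x₁ then a else 0) + (if x = x₂ then -b else 0), ?_, ?_⟩
  · have : ∀ x, w x * ((if x = x₁ then a else 0) + (if x = x₂ then -b else 0))
        = (if x = x₁ then w x * a else 0) + (if x = x₂ then w x * (-b) else 0) := by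
      intro x; split_ifs <;> ring
    simp only [this, Finset.sum_add_distrib, Finset.sum_ite_eq', Finset.mem_univ, if_true]
    have hwa : w x₁ * a = Real.sqrt (w x₁ * w x₂ / s) := by
      rw [ha, ← Real.sqrt_sq h1.le, ← Real.sqrt_mul (by positivity)]
      congr 1
      field_simp
      ring_nf; rw [Real.sq_sqrt (by positivity)]
    have hwb : w x₂ * b = Real.sqrt (w x₁ * w x₂ / s) := by
      rw [hb, ← Real.sqrt_sq h2.le, ← Real.sqrt_mul (by positivity)]
      congr 1
      field_simp
      ring_nf; rw [Real.sq_sqrt (by positivity)]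
    rw [mul_neg, hwa, hwb]
    ring
  · have : ∀ x, w x * ((if x = x₁ then a else 0) + (if x = x₂ then -b else 0)) ^ 2
        = (if x = x₁ then w x * a ^ 2 else 0) + (if x = x₂ then w x * b ^ 2 else 0) := by
      intro x
      by_cases e1 : x = x₁
      · subst e1; rw [if_pos rfl, if_neg hne, if_pos rfl, if_neg hne]; ring
      · by_cases e2 : x = x₂
        · subst e2; rw [if_neg e1, if_pos rfl, if_neg e1, if_pos rfl]; ring
        · rw [if_neg e1, if_neg e2, if_neg e1, if_neg e2]; ring
    simp only [this, Finset.sum_add_distrib, Finset.sum_ite_eq', Finset.mem_univ, if_true]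
    rw [ha, hb, Real.sq_sqrt (by positivity), Real.sq_sqrt (by positivity)]
    field_simp
    ring

lemma corrSet_neg {r : ℝ} (hr : r ∈ corrSet PXY) : -r ∈ corrSet PXY := by
  obtain ⟨h, g, h0, g0, h1, g1, hrr⟩ := hr
  refine ⟨h, fun y => -g y, h0, by simpa using g0, h1, by simpa using g1, ?_⟩
  rw [hrr, ← Finset.sum_neg_distrib]
  exact Finset.sum_congr rfl fun p _ => by ring

lemma psi_nonneg (hnn : ∀ p, 0 ≤ PXY p) (hsum : ∑ p : 𝒳 × 𝒴, PXY p = 1)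
    (hX2 : ∃ x₁ x₂ : 𝒳, x₁ ≠ x₂ ∧ 0 < margX PXY x₁ ∧ 0 < margX PXY x₂)
    (hY2 : ∃ y₁ y₂ : 𝒴, y₁ ≠ y₂ ∧ 0 < margY PXY y₁ ∧ 0 < margY PXY y₂)
    {ψ : ℝ} (hψ : IsLUB (corrSet PXY) ψ) : 0 ≤ ψ := by
  obtain ⟨x₁, x₂, hxne, hx1, hx2⟩ := hX2
  obtain ⟨y₁, y₂, hyne, hy1, hy2⟩ := hY2
  obtain ⟨h, h0, h1⟩ := exists_unit (margX_nonneg PXY hnn) hxne hx1 hx2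
  obtain ⟨g, g0, g1⟩ := exists_unit (margY_nonneg PXY hnn) hyne hy1 hy2
  set r := ∑ p : 𝒳 × 𝒴, PXY p * (h p.1 * g p.2) with hr
  have hmem : r ∈ corrSet PXY := ⟨h, g, h0, g0, h1, g1, rfl⟩
  have hmem' : -r ∈ corrSet PXY := corrSet_neg PXY hmem
  have h1' := hψ.1 hmem
  have h2' := hψ.1 hmem'
  linarith

/-- single-letter maximal correlation bound -/
lemma single_letter (hnn : ∀ p, 0 ≤ PXY p)
    {ψ : ℝ} (hψ : IsLUB (corrSet PXY) ψ) (hψ0 : 0 ≤ ψ)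
    (h : 𝒳 → ℝ) (g : 𝒴 → ℝ)
    (h0 : ∑ x, margX PXY x * h x = 0) (g0 : ∑ y, margY PXY y * g y = 0) :
    |∑ p : 𝒳 × 𝒴, PXY p * (h p.1 * g p.2)|
      ≤ ψ * (Real.sqrt (∑ x, margX PXY x * h x ^ 2) * Real.sqrt (∑ y, margY PXY y * g y ^ 2)) := by
  set A := ∑ x, margX PXY x * h x ^ 2 with hA
  set B := ∑ y, margY PXY y * g y ^ 2 with hB
  have hA0 : 0 ≤ A := Finset.sum_nonneg fun x _ => mul_nonneg (margX_nonneg PXY hnn x) (sq_nonneg _)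
  have hB0 : 0 ≤ B := Finset.sum_nonneg fun y _ => mul_nonneg (margY_nonneg PXY hnn y) (sq_nonneg _)
  by_cases hAz : A = 0
  · have hzero : ∀ p : 𝒳 × 𝒴, PXY p * (h p.1 * g p.2) = 0 := by
      intro p
      rcases eq_or_lt_of_le (hnn p) with hp | hp
      · rw [← hp]; ring
      · have hmx : 0 < margX PXY p.1 := lt_of_lt_of_le hp (le_margX PXY hnn p)
        have := (Finset.sum_eq_zero_iff_of_nonneg (fun x _ =>
          mul_nonneg (margX_nonneg PXY hnn x) (sq_nonneg (h x)))).mp hAz p.1 (Finset.mem_univ _)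
        have hh : h p.1 = 0 := by
          rcases mul_eq_zero.mp this with h' | h'
          · exact absurd h' (ne_of_gt hmx)
          · exact pow_eq_zero_iff (n := 2) (by norm_num) |>.mp h'
        rw [hh]; ring
    rw [Finset.sum_eq_zero fun p _ => hzero p, abs_zero, hAz, Real.sqrt_zero, zero_mul, mul_zero]
  · by_cases hBz : B = 0
    · have hzero : ∀ p : 𝒳 × 𝒴, PXY p * (h p.1 * g p.2) = 0 := by
        intro p
        rcases eq_or_lt_of_le (hnn p) with hp | hp
        · rw [← hp]; ring
        · have hmy : 0 < margY PXY p.2 := lt_of_lt_of_le hp (le_margY PXY hnn p)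
          have := (Finset.sum_eq_zero_iff_of_nonneg (fun y _ =>
            mul_nonneg (margY_nonneg PXY hnn y) (sq_nonneg (g y)))).mp hBz p.2 (Finset.mem_univ _)
          have hg : g p.2 = 0 := by
            rcases mul_eq_zero.mp this with h' | h'
            · exact absurd h' (ne_of_gt hmy)
            · exact pow_eq_zero_iff (n := 2) (by norm_num) |>.mp h'
          rw [hg]; ring
      rw [Finset.sum_eq_zero fun p _ => hzero p, abs_zero, hBz, Real.sqrt_zero, mul_zero, mul_zero]
    · have hApos : 0 < A := lt_of_le_of_ne hA0 (Ne.symm hAz)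
      have hBpos : 0 < B := lt_of_le_of_ne hB0 (Ne.symm hBz)
      set α := Real.sqrt A with hα
      set β := Real.sqrt B with hβ
      have hαpos : 0 < α := Real.sqrt_pos.mpr hApos
      have hβpos : 0 < β := Real.sqrt_pos.mpr hBpos
      have hα2 : α ^ 2 = A := Real.sq_sqrt hA0
      have hβ2 : β ^ 2 = B := Real.sq_sqrt hB0
      set h' := fun x => h x / α with hh'
      set g' := fun y => g y / β with hg'
      have c1 : ∑ x, margX PXY x * h' x = 0 := by
        simp only [hh', mul_div_assoc', ← Finset.sum_div, h0, zero_div]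
      have c2 : ∑ y, margY PXY y * g' y = 0 := by
        simp only [hg', mul_div_assoc', ← Finset.sum_div, g0, zero_div]
      have c3 : ∑ x, margX PXY x * h' x ^ 2 = 1 := by
        simp only [hh', div_pow, mul_div_assoc', ← Finset.sum_div, hα2, ← hA]
        exact div_self hAz
      have c4 : ∑ y, margY PXY y * g' y ^ 2 = 1 := by
        simp only [hg', div_pow, mul_div_assoc', ← Finset.sum_div, hβ2, ← hB]
        exact div_self hBz
      set r := ∑ p : 𝒳 × 𝒴, PXY p * (h' p.1 * g' p.2) with hr
      have hmem : r ∈ corrSet PXY := ⟨h', g', c1, c2, c3, c4, rfl⟩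
      have hrle : |r| ≤ ψ :=
        abs_le.mpr ⟨by have := hψ.1 (corrSet_neg PXY hmem); linarith, hψ.1 hmem⟩
      have hfact : ∑ p : 𝒳 × 𝒴, PXY p * (h p.1 * g p.2) = r * (α * β) := by
        rw [hr, Finset.sum_mul]
        refine Finset.sum_congr rfl fun p _ => ?_
        simp only [hh', hg']
        field_simp
      rw [hfact, abs_mul, abs_of_pos (mul_pos hαpos hβpos)]
      exact mul_le_mul_of_nonneg_right hrle (mul_pos hαpos hβpos).le
end SingleLetter
section ONB

lemma euclid_inner {σ : Type*} [Fintype σ] (v v' : EuclideanSpace ℝ σ) :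
    (inner ℝ v v' : ℝ) = ∑ c, v c * v' c := by
  simp [PiLp.inner_apply, mul_comm]

lemma euclid_sum_apply {σ : Type*} [Fintype σ] {m : ℕ} (r : Fin m → ℝ)
    (v : Fin m → EuclideanSpace ℝ σ) (c : σ) :
    (∑ j, r j • v j) c = ∑ j, r j * v j c := by
  simp

lemma sqdc {a : ℝ} (hs : Real.sqrt a ≠ 0) (x : ℝ) : Real.sqrt a * (x / Real.sqrt a) = x := by
  rw [mul_comm, div_mul_cancel₀ x hs]

lemma sqc1 {a : ℝ} (ha : 0 < a) (x y : ℝ) : a * (x / Real.sqrt a * (y / Real.sqrt a)) = x * y := by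
  have hs : Real.sqrt a ≠ 0 := ne_of_gt (Real.sqrt_pos.mpr ha)
  nth_rewrite 1 [← Real.mul_self_sqrt ha.le]
  rw [show Real.sqrt a * Real.sqrt a * (x / Real.sqrt a * (y / Real.sqrt a))
    = (Real.sqrt a * (x / Real.sqrt a)) * (Real.sqrt a * (y / Real.sqrt a)) from by ring]
  rw [sqdc hs, sqdc hs]

lemma sqc2 {a : ℝ} (ha : 0 < a) (x : ℝ) : a * (x / Real.sqrt a) = Real.sqrt a * x := by
  have hs : Real.sqrt a ≠ 0 := ne_of_gt (Real.sqrt_pos.mpr ha)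
  nth_rewrite 1 [← Real.mul_self_sqrt ha.le]
  rw [mul_assoc, sqdc hs]

lemma sqc3 {a : ℝ} (ha : 0 < a) (t : ℝ) :
    (Real.sqrt a * 1) * (Real.sqrt a * t) = a * t := by
  rw [mul_one, ← mul_assoc, Real.mul_self_sqrt ha.le]

lemma sqc4 {a : ℝ} (ha : 0 < a) (t x : ℝ) : a * t * (x / Real.sqrt a) = x * (Real.sqrt a * t) := by
  have hs : Real.sqrt a ≠ 0 := ne_of_gt (Real.sqrt_pos.mpr ha)
  nth_rewrite 1 [← Real.mul_self_sqrt ha.le]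
  rw [show Real.sqrt a * Real.sqrt a * t * (x / Real.sqrt a)
    = (Real.sqrt a * (x / Real.sqrt a)) * (Real.sqrt a * t) from by ring]
  rw [sqdc hs]

open scoped Classical in
lemma sum_support_eq {w : 𝒳 → ℝ} (G : 𝒳 → ℝ) (hG : ∀ c, ¬ 0 < w c → G c = 0) :
    ∑ c : {c : 𝒳 // 0 < w c}, G c.1 = ∑ c : 𝒳, G c := by
  rw [← Finset.sum_filter_add_sum_filter_not Finset.univ (fun c => 0 < w c) G]
  have h2 : ∑ c ∈ Finset.univ.filter (fun c => ¬ 0 < w c), G c = 0 :=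
    Finset.sum_eq_zero fun c hc => hG c (Finset.mem_filter.mp hc).2
  have h1 : ∑ c ∈ Finset.univ.filter (fun c => 0 < w c), G c
      = ∑ c : {c : 𝒳 // 0 < w c}, G c.1 := Finset.sum_subtype _ (by simp) G
  rw [h1, h2, add_zero]

open scoped Classical in
/-- the vector `(√(w c) · h c)_c` over the support of `w` -/
def Wvec (w : 𝒳 → ℝ) (h : 𝒳 → ℝ) : EuclideanSpace ℝ {c : 𝒳 // 0 < w c} :=
  WithLp.toLp 2 (fun c => Real.sqrt (w c.1) * h c.1)

open scoped Classical in
def Kspace (w : 𝒳 → ℝ) : Submodule ℝ (EuclideanSpace ℝ {c : 𝒳 // 0 < w c}) :=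
  (Submodule.span ℝ ({Wvec w (fun _ => 1)} : Set (EuclideanSpace ℝ {c : 𝒳 // 0 < w c})))ᗮ

open scoped Classical in
lemma exists_onb {w : 𝒳 → ℝ} (hnn : ∀ x, 0 ≤ w x) :
    ∃ (m : ℕ) (φ : Fin m → 𝒳 → ℝ),
      (∀ j j', (∑ c, w c * (φ j c * φ j' c)) = if j = j' then 1 else 0) ∧
      (∀ j, (∑ c, w c * φ j c) = 0) ∧
      (∀ h : 𝒳 → ℝ, (∑ c, w c * h c) = 0 → ∀ c, 0 < w c →
        h c = ∑ j, (∑ c', w c' * h c' * φ j c') * φ j c) := by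
  have hwz : ∀ c : 𝒳, ¬ 0 < w c → w c = 0 := fun c hc => le_antisymm (not_lt.mp hc) (hnn c)
  set b := stdOrthonormalBasis ℝ ↥(Kspace w) with hbdef
  set m := Module.finrank ℝ ↥(Kspace w) with hmdef
  set φ : Fin m → 𝒳 → ℝ := fun j c => if h : 0 < w c then
    (b j : EuclideanSpace ℝ {c : 𝒳 // 0 < w c}) ⟨c, h⟩ / Real.sqrt (w c) else 0 with hφdef
  have hφat : ∀ (j : Fin m) (c : {c : 𝒳 // 0 < w c}),
      φ j c.1 = (b j : EuclideanSpace ℝ {c : 𝒳 // 0 < w c}) c / Real.sqrt (w c.1) := by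
    intro j c
    rw [hφdef]
    simp only [dif_pos c.2, Subtype.coe_eta]
  refine ⟨m, φ, ?_, ?_, ?_⟩
  · intro j j'
    have horth := orthonormal_iff_ite.mp b.orthonormal j j'
    rw [show (inner ℝ (b j) (b j') : ℝ)
      = inner ℝ ((b j : _) : EuclideanSpace ℝ {c : 𝒳 // 0 < w c}) ((b j' : _) :
        EuclideanSpace ℝ {c : 𝒳 // 0 < w c}) from rfl, euclid_inner] at horth
    calc ∑ c : 𝒳, w c * (φ j c * φ j' c)
        = ∑ c : {c : 𝒳 // 0 < w c}, w c.1 * (φ j c.1 * φ j' c.1) :=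
          (sum_support_eq _ (fun c hc => by simp [hwz c hc])).symm
      _ = ∑ c : {c : 𝒳 // 0 < w c}, (b j : EuclideanSpace ℝ {c : 𝒳 // 0 < w c}) c *
            (b j' : EuclideanSpace ℝ {c : 𝒳 // 0 < w c}) c := by
          refine Finset.sum_congr rfl fun c _ => ?_
          rw [hφat, hφat, sqc1 c.2]
      _ = if j = j' then 1 else 0 := horth
  · intro j
    have hmem := (b j).2
    have h0 : (inner ℝ (Wvec w (fun _ => 1))
        ((b j : _) : EuclideanSpace ℝ {c : 𝒳 // 0 < w c}) : ℝ) = 0 :=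
      Submodule.mem_orthogonal_singleton_iff_inner_right.mp hmem
    rw [euclid_inner] at h0
    calc ∑ c : 𝒳, w c * φ j c
        = ∑ c : {c : 𝒳 // 0 < w c}, w c.1 * φ j c.1 :=
          (sum_support_eq _ (fun c hc => by simp [hwz c hc])).symm
      _ = ∑ c : {c : 𝒳 // 0 < w c}, Wvec w (fun _ => 1) c *
            (b j : EuclideanSpace ℝ {c : 𝒳 // 0 < w c}) c := by
          refine Finset.sum_congr rfl fun c _ => ?_
          rw [hφat, sqc2 c.2, Wvec, PiLp.toLp_apply]
          ring
      _ = 0 := h0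
  · intro h h0 c hc
    have hWK : Wvec w h ∈ Kspace w := by
      refine Submodule.mem_orthogonal_singleton_iff_inner_right.mpr ?_
      rw [euclid_inner]
      calc ∑ c : {c : 𝒳 // 0 < w c}, Wvec w (fun _ => 1) c * Wvec w h c
          = ∑ c : {c : 𝒳 // 0 < w c}, w c.1 * h c.1 := by
            refine Finset.sum_congr rfl fun c' _ => ?_
            exact sqc3 c'.2 (h c'.1)
        _ = ∑ c : 𝒳, w c * h c := sum_support_eq (w := w) (fun c => w c * h c)
            (fun c hc => by simp [hwz c hc])
        _ = 0 := h0
    have hcoef : ∀ j : Fin m, b.repr ⟨Wvec w h, hWK⟩ j = ∑ c', w c' * h c' * φ j c' := by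
      intro j
      rw [b.repr_apply_apply]
      rw [show (inner ℝ (b j) (⟨Wvec w h, hWK⟩ : ↥(Kspace w)) : ℝ)
        = inner ℝ ((b j : _) : EuclideanSpace ℝ {c : 𝒳 // 0 < w c}) (Wvec w h) from rfl, euclid_inner]
      calc ∑ c : {c : 𝒳 // 0 < w c}, (b j : EuclideanSpace ℝ {c : 𝒳 // 0 < w c}) c * Wvec w h c
          = ∑ c : {c : 𝒳 // 0 < w c}, w c.1 * h c.1 * φ j c.1 := by
            refine Finset.sum_congr rfl fun c' _ => ?_
            rw [hφat, sqc4 c'.2, Wvec, PiLp.toLp_apply]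
        _ = ∑ c', w c' * h c' * φ j c' := sum_support_eq (w := w)
            (fun c' => w c' * h c' * φ j c') (fun c hc => by simp [hwz c hc])
    have hcoord : Real.sqrt (w c) * h c
        = ∑ j, b.repr ⟨Wvec w h, hWK⟩ j * (b j : EuclideanSpace ℝ {c : 𝒳 // 0 < w c}) ⟨c, hc⟩ := by
      have h1 : ((∑ j, b.repr ⟨Wvec w h, hWK⟩ j • b j : ↥(Kspace w)) :
            EuclideanSpace ℝ {c : 𝒳 // 0 < w c})
          = ∑ j, b.repr ⟨Wvec w h, hWK⟩ j • ((b j : _) : EuclideanSpace ℝ {c : 𝒳 // 0 < w c}) := by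
        push_cast
        rfl
      have h2 := congrArg (Subtype.val) (b.sum_repr ⟨Wvec w h, hWK⟩)
      rw [h1] at h2
      have h3 := congrArg (fun v : EuclideanSpace ℝ {c : 𝒳 // 0 < w c} => v ⟨c, hc⟩) h2
      beta_reduce at h3
      rw [euclid_sum_apply] at h3
      exact h3.symm
    have hs : Real.sqrt (w c) ≠ 0 := ne_of_gt (Real.sqrt_pos.mpr hc)
    have hφc : ∀ j, φ j c = (b j : EuclideanSpace ℝ {c : 𝒳 // 0 < w c}) ⟨c, hc⟩
        / Real.sqrt (w c) := by
      intro j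
      rw [hφdef]
      simp only [dif_pos hc]
    calc h c = (Real.sqrt (w c) * h c) / Real.sqrt (w c) := by field_simp
      _ = (∑ j, b.repr ⟨Wvec w h, hWK⟩ j * (b j : EuclideanSpace ℝ {c : 𝒳 // 0 < w c}) ⟨c, hc⟩)
          / Real.sqrt (w c) := by rw [hcoord]
      _ = ∑ j, b.repr ⟨Wvec w h, hWK⟩ j * ((b j : EuclideanSpace ℝ {c : 𝒳 // 0 < w c}) ⟨c, hc⟩
          / Real.sqrt (w c)) := by rw [Finset.sum_div]; exact Finset.sum_congr rfl fun j _ => by ring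
      _ = ∑ j, (∑ c', w c' * h c' * φ j c') * φ j c := by
          refine Finset.sum_congr rfl fun j _ => ?_
          rw [hφc j, ← hcoef j]
end ONB
section Helpers

lemma EX_congr {n : ℕ} (PX : 𝒳 → ℝ) {g g' : (Fin n → 𝒳) → ℝ} (h : ∀ x, g x = g' x) :
    EX PX g = EX PX g' := by
  unfold EX; exact Finset.sum_congr rfl fun x _ => by rw [h x]

lemma EJ_congr {n : ℕ} (PXY : 𝒳 × 𝒴 → ℝ) {g g' : (Fin n → 𝒳) → (Fin n → 𝒴) → ℝ}
    (h : ∀ x y, g x y = g' x y) : EJ PXY g = EJ PXY g' := by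
  unfold EJ; exact Finset.sum_congr rfl fun ω _ => by rw [h]

lemma EX_mono {n : ℕ} (PX : 𝒳 → ℝ) (hnn : ∀ c, 0 ≤ PX c) {g g' : (Fin n → 𝒳) → ℝ}
    (h : ∀ x, g x ≤ g' x) : EX PX g ≤ EX PX g' := by
  unfold EX
  refine Finset.sum_le_sum fun x _ => ?_
  exact mul_le_mul_of_nonneg_left (h x) (Finset.prod_nonneg fun i _ => hnn _)

lemma EX_nonneg_sq {n : ℕ} (PX : 𝒳 → ℝ) (hnn : ∀ c, 0 ≤ PX c) (g : (Fin n → 𝒳) → ℝ) :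
    0 ≤ EX PX (fun x => g x ^ 2) :=
  Finset.sum_nonneg fun x _ => mul_nonneg (Finset.prod_nonneg fun i _ => hnn _) (sq_nonneg _)

lemma parseval_vec {m : ℕ} {w : 𝒳 → ℝ} {φ : Fin m → 𝒳 → ℝ}
    (orth : ∀ j j', (∑ c, w c * (φ j c * φ j' c)) = if j = j' then (1:ℝ) else 0)
    (v : Fin m → ℝ) :
    ∑ c, w c * (∑ j, v j * φ j c) ^ 2 = ∑ j, v j ^ 2 := by
  have point : ∀ c, w c * (∑ j, v j * φ j c) ^ 2
      = ∑ j, ∑ j', (v j * v j') * (w c * (φ j c * φ j' c)) := by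
    intro c
    rw [sq, Finset.sum_mul_sum]
    rw [Finset.mul_sum]
    refine Finset.sum_congr rfl fun j _ => ?_
    rw [Finset.mul_sum]
    refine Finset.sum_congr rfl fun j' _ => ?_
    ring
  simp only [point]
  rw [Finset.sum_comm]
  refine Finset.sum_congr rfl fun j _ => ?_
  rw [Finset.sum_comm]
  have : ∀ j', ∑ c, (v j * v j') * (w c * (φ j c * φ j' c))
      = if j = j' then v j * v j' else 0 := by
    intro j'
    rw [← Finset.mul_sum, orth j j']
    split_ifs <;> ring
  simp only [this]
  rw [Finset.sum_ite_eq Finset.univ j (fun j' => v j * v j')]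
  simp [sq]

lemma cs_sqrt {m : ℕ} (p q : Fin m → ℝ) (hp : ∀ j, 0 ≤ p j) (hq : ∀ j, 0 ≤ q j) :
    ∑ j, Real.sqrt (p j) * Real.sqrt (q j)
      ≤ Real.sqrt (∑ j, p j) * Real.sqrt (∑ j, q j) := by
  have h1 : (∑ j, Real.sqrt (p j) * Real.sqrt (q j)) ^ 2
      ≤ (∑ j, Real.sqrt (p j) ^ 2) * (∑ j, Real.sqrt (q j) ^ 2) :=
    Finset.sum_mul_sq_le_sq_mul_sq _ _ _
  have h2 : ∑ j, Real.sqrt (p j) ^ 2 = ∑ j, p j :=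
    Finset.sum_congr rfl fun j _ => Real.sq_sqrt (hp j)
  have h3 : ∑ j, Real.sqrt (q j) ^ 2 = ∑ j, q j :=
    Finset.sum_congr rfl fun j _ => Real.sq_sqrt (hq j)
  have h4 : 0 ≤ ∑ j, Real.sqrt (p j) * Real.sqrt (q j) :=
    Finset.sum_nonneg fun j _ => mul_nonneg (Real.sqrt_nonneg _) (Real.sqrt_nonneg _)
  rw [h2, h3] at h1
  calc ∑ j, Real.sqrt (p j) * Real.sqrt (q j)
      = Real.sqrt ((∑ j, Real.sqrt (p j) * Real.sqrt (q j)) ^ 2) := (Real.sqrt_sq h4).symm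
    _ ≤ Real.sqrt ((∑ j, p j) * (∑ j, q j)) := Real.sqrt_le_sqrt h1
    _ = Real.sqrt (∑ j, p j) * Real.sqrt (∑ j, q j) :=
        Real.sqrt_mul (Finset.sum_nonneg fun j _ => hp j) _

lemma bilinear_expand {mX mY : ℕ} (PXY : 𝒳 × 𝒴 → ℝ) (φ : Fin mX → 𝒳 → ℝ) (γ : Fin mY → 𝒴 → ℝ)
    (u : Fin mX → ℝ) (v : Fin mY → ℝ) :
    ∑ p : 𝒳 × 𝒴, PXY p * ((∑ j, u j * φ j p.1) * (∑ l, v l * γ l p.2))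
      = ∑ j, ∑ l, (u j * v l) * (∑ p : 𝒳 × 𝒴, PXY p * (φ j p.1 * γ l p.2)) := by
  have point : ∀ p : 𝒳 × 𝒴, PXY p * ((∑ j, u j * φ j p.1) * (∑ l, v l * γ l p.2))
      = ∑ j, ∑ l, (u j * v l) * (PXY p * (φ j p.1 * γ l p.2)) := by
    intro p
    rw [Finset.sum_mul_sum, Finset.mul_sum]
    refine Finset.sum_congr rfl fun j _ => ?_
    rw [Finset.mul_sum]
    refine Finset.sum_congr rfl fun l _ => ?_
    ring
  simp only [point]
  rw [Finset.sum_comm]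
  refine Finset.sum_congr rfl fun j _ => ?_
  rw [Finset.sum_comm]
  refine Finset.sum_congr rfl fun l _ => ?_
  rw [← Finset.mul_sum]

end Helpers
/-- The key tensorization bound. -/
lemma main_bound {n : ℕ} (PXY : 𝒳 × 𝒴 → ℝ)
    (hnn : ∀ p, 0 ≤ PXY p) (hsum : ∑ p : 𝒳 × 𝒴, PXY p = 1)
    [Nonempty 𝒳] [Nonempty 𝒴]
    {ψ : ℝ} (hψ : IsLUB (corrSet PXY) ψ) (hψ0 : 0 ≤ ψ) :
    ∀ S : Finset (Fin n), ∀ a : (Fin n → 𝒳) → ℝ, ∀ b : (Fin n → 𝒴) → ℝ,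
      DepOn a S → DepOn b S →
      (∀ k ∈ S, ∀ x, Ak (margX PXY) k a x = 0) →
      (∀ k ∈ S, ∀ y, Ak (margY PXY) k b y = 0) →
      |EJ PXY (fun x y => a x * b y)|
        ≤ ψ ^ S.card * (Real.sqrt (EX (margX PXY) (fun x => a x ^ 2)) *
            Real.sqrt (EX (margY PXY) (fun y => b y ^ 2))) := by
  have hnnX : ∀ c, 0 ≤ margX PXY c := margX_nonneg PXY hnn
  have hnnY : ∀ d, 0 ≤ margY PXY d := margY_nonneg PXY hnn
  have hw1X : ∑ c, margX PXY c = 1 := margX_sum PXY hsum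
  have hw1Y : ∑ d, margY PXY d = 1 := margY_sum PXY hsum
  intro S
  induction S using Finset.strongInduction with
  | _ S ih =>
    intro a b hda hdb hza hzb
    rcases S.eq_empty_or_nonempty with hS | hS
    · -- base case
      subst hS
      set x₀ : Fin n → 𝒳 := fun _ => Classical.arbitrary 𝒳 with hx₀
      set y₀ : Fin n → 𝒴 := fun _ => Classical.arbitrary 𝒴 with hy₀
      have hac : ∀ x, a x = a x₀ := fun x => hda x x₀ (fun i hi => absurd hi (Finset.notMem_empty i))
      have hbc : ∀ y, b y = b y₀ := fun y => hdb y y₀ (fun i hi => absurd hi (Finset.notMem_empty i))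
      have hEJ : EJ PXY (fun x y => a x * b y) = a x₀ * b y₀ := by
        unfold EJ
        have : ∀ ω : Fin n → 𝒳 × 𝒴, (∏ i, PXY (ω i)) * (a (fun i => (ω i).1) * b (fun i => (ω i).2))
            = (∏ i, PXY (ω i)) * (a x₀ * b y₀) := by
          intro ω; rw [hac (fun i => (ω i).1), hbc (fun i => (ω i).2)]
        simp only [this]
        rw [← Finset.sum_mul, sum_pi_prod (f := fun _ p => PXY p)]
        simp [hsum]
      have hEXa : EX (margX PXY) (fun x => a x ^ 2) = a x₀ ^ 2 := by
        have : ∀ x, a x ^ 2 = a x₀ ^ 2 := fun x => by rw [hac x]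
        rw [EX_congr (margX PXY) this, EX_const (margX PXY) hw1X]
      have hEXb : EX (margY PXY) (fun y => b y ^ 2) = b y₀ ^ 2 := by
        have : ∀ y, b y ^ 2 = b y₀ ^ 2 := fun y => by rw [hbc y]
        rw [EX_congr (margY PXY) this, EX_const (margY PXY) hw1Y]
      rw [hEJ, hEXa, hEXb, Finset.card_empty, pow_zero, one_mul,
        Real.sqrt_sq_eq_abs, Real.sqrt_sq_eq_abs, abs_mul]
    · -- inductive step
      obtain ⟨k, hk⟩ := hS
      obtain ⟨mX, φ, φorth, φmean, φcompl⟩ := exists_onb (w := margX PXY) hnnX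
      obtain ⟨mY, γ, γorth, γmean, γcompl⟩ := exists_onb (w := margY PXY) hnnY
      set S' := S.erase k with hS'
      have hS'lt : S' ⊂ S := Finset.erase_ssubset hk
      have hcard : S'.card + 1 = S.card := Finset.card_erase_add_one hk
      set aj : Fin mX → (Fin n → 𝒳) → ℝ :=
        fun j x => ∑ c, margX PXY c * a (Function.update x k c) * φ j c with haj
      set bl : Fin mY → (Fin n → 𝒴) → ℝ :=
        fun l y => ∑ d, margY PXY d * b (Function.update y k d) * γ l d with hbl
      set M : Fin mX → Fin mY → ℝ :=
        fun j l => ∑ p : 𝒳 × 𝒴, PXY p * (φ j p.1 * γ l p.2) with hM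
      set bhat : Fin mX → (Fin n → 𝒴) → ℝ :=
        fun j y => ∑ l, M j l * bl l y with hbhat
      -- dependence facts
      have hdaj : ∀ j, DepOn (aj j) S' := by
        intro j x y hxy
        rw [haj]
        refine Finset.sum_congr rfl fun c _ => ?_
        have : a (Function.update x k c) = a (Function.update y k c) := by
          refine hda _ _ fun i hi => ?_
          by_cases hik : i = k
          · subst hik; simp
          · rw [Function.update_of_ne hik, Function.update_of_ne hik]
            exact hxy i (Finset.mem_erase.mpr ⟨hik, hi⟩)
        rw [this]
      have hdbl : ∀ l, DepOn (bl l) S' := by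
        intro l y y' hyy
        rw [hbl]
        refine Finset.sum_congr rfl fun d _ => ?_
        have : b (Function.update y k d) = b (Function.update y' k d) := by
          refine hdb _ _ fun i hi => ?_
          by_cases hik : i = k
          · subst hik; simp
          · rw [Function.update_of_ne hik, Function.update_of_ne hik]
            exact hyy i (Finset.mem_erase.mpr ⟨hik, hi⟩)
        rw [this]
      have hdbhat : ∀ j, DepOn (bhat j) S' := by
        intro j y y' hyy
        rw [hbhat]
        exact Finset.sum_congr rfl fun l _ => by rw [hdbl l y y' hyy]
      -- mean-zero facts
      have hzaj : ∀ j, ∀ m' ∈ S', ∀ x, Ak (margX PXY) m' (aj j) x = 0 := by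
        intro j m' hm' x
        have hm'k : m' ≠ k := (Finset.mem_erase.mp hm').1
        have hm'S : m' ∈ S := (Finset.mem_erase.mp hm').2
        unfold Ak
        rw [haj]
        have swap : ∀ c', margX PXY c' * ∑ c, margX PXY c * a (Function.update (Function.update x m' c') k c) * φ j c
            = ∑ c, (margX PXY c * φ j c) * (margX PXY c' * a (Function.update (Function.update x k c) m' c')) := by
          intro c'
          rw [Finset.mul_sum]
          refine Finset.sum_congr rfl fun c _ => ?_
          rw [Function.update_comm hm'k]
          ring
        simp only [swap]
        rw [Finset.sum_comm]
        have inner0 : ∀ c, ∑ c', (margX PXY c * φ j c) * (margX PXY c' * a (Function.update (Function.update x k c) m' c')) = 0 := by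
          intro c
          rw [← Finset.mul_sum]
          have := hza m' hm'S (Function.update x k c)
          unfold Ak at this
          rw [this, mul_zero]
        simp only [inner0, Finset.sum_const_zero]
      have hzbl : ∀ l, ∀ m' ∈ S', ∀ y, Ak (margY PXY) m' (bl l) y = 0 := by
        intro l m' hm' y
        have hm'k : m' ≠ k := (Finset.mem_erase.mp hm').1
        have hm'S : m' ∈ S := (Finset.mem_erase.mp hm').2
        unfold Ak
        rw [hbl]
        have swap : ∀ d', margY PXY d' * ∑ d, margY PXY d * b (Function.update (Function.update y m' d') k d) * γ l d
            = ∑ d, (margY PXY d * γ l d) * (margY PXY d' * b (Function.update (Function.update y k d) m' d')) := by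
          intro d'
          rw [Finset.mul_sum]
          refine Finset.sum_congr rfl fun d _ => ?_
          rw [Function.update_comm hm'k]
          ring
        simp only [swap]
        rw [Finset.sum_comm]
        have inner0 : ∀ d, ∑ d', (margY PXY d * γ l d) * (margY PXY d' * b (Function.update (Function.update y k d) m' d')) = 0 := by
          intro d
          rw [← Finset.mul_sum]
          have := hzb m' hm'S (Function.update y k d)
          unfold Ak at this
          rw [this, mul_zero]
        simp only [inner0, Finset.sum_const_zero]
      have hzbhat : ∀ j, ∀ m' ∈ S', ∀ y, Ak (margY PXY) m' (bhat j) y = 0 := by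
        intro j m' hm' y
        unfold Ak
        rw [hbhat]
        have : ∀ d, margY PXY d * ∑ l, M j l * bl l (Function.update y m' d)
            = ∑ l, M j l * (margY PXY d * bl l (Function.update y m' d)) := by
          intro d
          rw [Finset.mul_sum]
          exact Finset.sum_congr rfl fun l _ => by ring
        simp only [this]
        rw [Finset.sum_comm]
        have : ∀ l, ∑ d, M j l * (margY PXY d * bl l (Function.update y m' d)) = 0 := by
          intro l
          rw [← Finset.mul_sum]
          have := hzbl l m' hm' y
          unfold Ak at this
          rw [this, mul_zero]
        simp only [this, Finset.sum_const_zero]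
      -- reconstruction
      have hreca : ∀ x, ∀ c, 0 < margX PXY c →
          a (Function.update x k c) = ∑ j, aj j x * φ j c := by
        intro x c hc
        have hmean : ∑ c', margX PXY c' * a (Function.update x k c') = 0 := by
          have := hza k hk x
          unfold Ak at this
          exact this
        exact φcompl (fun c' => a (Function.update x k c')) hmean c hc
      have hrecb : ∀ y, ∀ d, 0 < margY PXY d →
          b (Function.update y k d) = ∑ l, bl l y * γ l d := by
        intro y d hd
        have hmean : ∑ d', margY PXY d' * b (Function.update y k d') = 0 := by
          have := hzb k hk y
          unfold Ak at this
          exact this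
        exact γcompl (fun d' => b (Function.update y k d')) hmean d hd
      -- Parseval
      have hparsa : EX (margX PXY) (fun x => a x ^ 2) = ∑ j, EX (margX PXY) (fun x => aj j x ^ 2) := by
        rw [← EX_sum]
        rw [← EX_Ak (margX PXY) hw1X k (fun x => a x ^ 2)]
        refine EX_congr _ fun x => ?_
        unfold Ak
        have : ∀ c, margX PXY c * a (Function.update x k c) ^ 2
            = margX PXY c * (∑ j, aj j x * φ j c) ^ 2 := by
          intro c
          rcases lt_or_eq_of_le (hnnX c) with hc | hc
          · rw [hreca x c hc]
          · rw [← hc, zero_mul, zero_mul]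
        simp only [this]
        rw [parseval_vec φorth (fun j => aj j x)]
      have hparsb : EX (margY PXY) (fun y => b y ^ 2) = ∑ l, EX (margY PXY) (fun y => bl l y ^ 2) := by
        rw [← EX_sum]
        rw [← EX_Ak (margY PXY) hw1Y k (fun y => b y ^ 2)]
        refine EX_congr _ fun y => ?_
        unfold Ak
        have : ∀ d, margY PXY d * b (Function.update y k d) ^ 2
            = margY PXY d * (∑ l, bl l y * γ l d) ^ 2 := by
          intro d
          rcases lt_or_eq_of_le (hnnY d) with hd | hd
          · rw [hrecb y d hd]
          · rw [← hd, zero_mul, zero_mul]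
        simp only [this]
        rw [parseval_vec γorth (fun l => bl l y)]
      -- EJ expansion
      have hexp : EJ PXY (fun x y => a x * b y) = ∑ j, EJ PXY (fun x y => aj j x * bhat j y) := by
        rw [← EJ_AJ PXY hsum k (fun x y => a x * b y)]
        rw [← EJ_sum]
        refine EJ_congr _ fun x y => ?_
        unfold AJ
        have point : ∀ p : 𝒳 × 𝒴, PXY p * (a (Function.update x k p.1) * b (Function.update y k p.2))
            = PXY p * ((∑ j, aj j x * φ j p.1) * (∑ l, bl l y * γ l p.2)) := by
          intro p
          rcases lt_or_eq_of_le (hnn p) with hp | hp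
          · rw [hreca x p.1 (lt_of_lt_of_le hp (le_margX PXY hnn p)),
              hrecb y p.2 (lt_of_lt_of_le hp (le_margY PXY hnn p))]
          · rw [← hp, zero_mul, zero_mul]
        simp only [point]
        rw [bilinear_expand PXY φ γ (fun j => aj j x) (fun l => bl l y)]
        refine Finset.sum_congr rfl fun j _ => ?_
        rw [hbhat]
        rw [Finset.mul_sum]
        refine Finset.sum_congr rfl fun l _ => ?_
        rw [hM]
        ring
      -- operator bound, pointwise in y
      have hop : ∀ y, ∑ j, bhat j y ^ 2 ≤ ψ ^ 2 * ∑ l, bl l y ^ 2 := by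
        intro y
        set t := ∑ j, bhat j y ^ 2 with ht
        set V := ∑ l, bl l y ^ 2 with hV
        have ht0 : 0 ≤ t := Finset.sum_nonneg fun j _ => sq_nonneg _
        have hV0 : 0 ≤ V := Finset.sum_nonneg fun l _ => sq_nonneg _
        have hBval : ∑ p : 𝒳 × 𝒴, PXY p * ((∑ j, bhat j y * φ j p.1) * (∑ l, bl l y * γ l p.2)) = t := by
          rw [bilinear_expand PXY φ γ (fun j => bhat j y) (fun l => bl l y), ht]
          refine Finset.sum_congr rfl fun j _ => ?_
          have : ∑ l, (bhat j y * bl l y) * (∑ p : 𝒳 × 𝒴, PXY p * (φ j p.1 * γ l p.2))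
              = bhat j y * ∑ l, M j l * bl l y := by
            rw [Finset.mul_sum]
            refine Finset.sum_congr rfl fun l _ => ?_
            rw [hM]
            ring
          rw [this, sq]
        have hmean1 : ∑ c, margX PXY c * (∑ j, bhat j y * φ j c) = 0 := by
          have : ∀ c, margX PXY c * (∑ j, bhat j y * φ j c)
              = ∑ j, bhat j y * (margX PXY c * φ j c) := by
            intro c
            rw [Finset.mul_sum]
            exact Finset.sum_congr rfl fun j _ => by ring
          simp only [this]
          rw [Finset.sum_comm]
          have : ∀ j, ∑ c, bhat j y * (margX PXY c * φ j c) = 0 := by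
            intro j
            rw [← Finset.mul_sum, φmean j, mul_zero]
          simp only [this, Finset.sum_const_zero]
        have hmean2 : ∑ d, margY PXY d * (∑ l, bl l y * γ l d) = 0 := by
          have : ∀ d, margY PXY d * (∑ l, bl l y * γ l d)
              = ∑ l, bl l y * (margY PXY d * γ l d) := by
            intro d
            rw [Finset.mul_sum]
            exact Finset.sum_congr rfl fun l _ => by ring
          simp only [this]
          rw [Finset.sum_comm]
          have : ∀ l, ∑ d, bl l y * (margY PXY d * γ l d) = 0 := by
            intro l
            rw [← Finset.mul_sum, γmean l, mul_zero]
          simp only [this, Finset.sum_const_zero]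
        have hnorm1 : ∑ c, margX PXY c * (∑ j, bhat j y * φ j c) ^ 2 = t :=
          parseval_vec φorth (fun j => bhat j y)
        have hnorm2 : ∑ d, margY PXY d * (∑ l, bl l y * γ l d) ^ 2 = V :=
          parseval_vec γorth (fun l => bl l y)
        have hsl := single_letter PXY hnn hψ hψ0 (fun c => ∑ j, bhat j y * φ j c)
          (fun d => ∑ l, bl l y * γ l d) hmean1 hmean2
        rw [hBval, hnorm1, hnorm2, abs_of_nonneg ht0] at hsl
        -- t ≤ ψ √t √V  ⟹  t ≤ ψ² V
        rcases eq_or_lt_of_le ht0 with ht0' | ht0'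
        · rw [← ht0']
          positivity
        · have hst : 0 < Real.sqrt t := Real.sqrt_pos.mpr ht0'
          have h1 : Real.sqrt t * Real.sqrt t ≤ ψ * (Real.sqrt t * Real.sqrt V) := by
            rw [Real.mul_self_sqrt ht0]
            exact hsl
          have h2 : Real.sqrt t ≤ ψ * Real.sqrt V := by
            have h1' : Real.sqrt t * Real.sqrt t ≤ Real.sqrt t * (ψ * Real.sqrt V) := by
              calc Real.sqrt t * Real.sqrt t ≤ ψ * (Real.sqrt t * Real.sqrt V) := h1
                _ = Real.sqrt t * (ψ * Real.sqrt V) := by ring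
            exact le_of_mul_le_mul_left h1' hst
          calc t = Real.sqrt t ^ 2 := (Real.sq_sqrt ht0).symm
            _ ≤ (ψ * Real.sqrt V) ^ 2 := by
                apply pow_le_pow_left₀ (Real.sqrt_nonneg t) h2
            _ = ψ ^ 2 * Real.sqrt V ^ 2 := by ring
            _ = ψ ^ 2 * V := by rw [Real.sq_sqrt hV0]
      -- combine
      have hIH : ∀ j, |EJ PXY (fun x y => aj j x * bhat j y)|
          ≤ ψ ^ S'.card * (Real.sqrt (EX (margX PXY) (fun x => aj j x ^ 2)) *
              Real.sqrt (EX (margY PXY) (fun y => bhat j y ^ 2))) := by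
        intro j
        exact ih S' hS'lt (aj j) (bhat j) (hdaj j) (hdbhat j) (hzaj j) (hzbhat j)
      calc |EJ PXY (fun x y => a x * b y)|
          = |∑ j, EJ PXY (fun x y => aj j x * bhat j y)| := by rw [hexp]
        _ ≤ ∑ j, |EJ PXY (fun x y => aj j x * bhat j y)| := Finset.abs_sum_le_sum_abs _ _
        _ ≤ ∑ j, ψ ^ S'.card * (Real.sqrt (EX (margX PXY) (fun x => aj j x ^ 2)) *
              Real.sqrt (EX (margY PXY) (fun y => bhat j y ^ 2))) :=
            Finset.sum_le_sum fun j _ => hIH j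
        _ = ψ ^ S'.card * ∑ j, Real.sqrt (EX (margX PXY) (fun x => aj j x ^ 2)) *
              Real.sqrt (EX (margY PXY) (fun y => bhat j y ^ 2)) := by rw [Finset.mul_sum]
        _ ≤ ψ ^ S'.card * (Real.sqrt (∑ j, EX (margX PXY) (fun x => aj j x ^ 2)) *
              Real.sqrt (∑ j, EX (margY PXY) (fun y => bhat j y ^ 2))) := by
            refine mul_le_mul_of_nonneg_left ?_ (pow_nonneg hψ0 _)
            exact cs_sqrt _ _ (fun j => EX_nonneg_sq _ hnnX _) (fun j => EX_nonneg_sq _ hnnY _)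
        _ ≤ ψ ^ S'.card * (Real.sqrt (EX (margX PXY) (fun x => a x ^ 2)) *
              Real.sqrt (ψ ^ 2 * EX (margY PXY) (fun y => b y ^ 2))) := by
            refine mul_le_mul_of_nonneg_left ?_ (pow_nonneg hψ0 _)
            rw [← hparsa]
            refine mul_le_mul_of_nonneg_left ?_ (Real.sqrt_nonneg _)
            refine Real.sqrt_le_sqrt ?_
            calc ∑ j, EX (margY PXY) (fun y => bhat j y ^ 2)
                = EX (margY PXY) (fun y => ∑ j, bhat j y ^ 2) := (EX_sum _ _ _).symm
              _ ≤ EX (margY PXY) (fun y => ψ ^ 2 * ∑ l, bl l y ^ 2) := EX_mono _ hnnY hop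
              _ = ψ ^ 2 * ∑ l, EX (margY PXY) (fun y => bl l y ^ 2) := by
                  rw [← EX_sum]
                  unfold EX
                  rw [Finset.mul_sum]
                  exact Finset.sum_congr rfl fun y _ => by ring
              _ = ψ ^ 2 * EX (margY PXY) (fun y => b y ^ 2) := by rw [← hparsb]
        _ = ψ ^ S.card * (Real.sqrt (EX (margX PXY) (fun x => a x ^ 2)) *
              Real.sqrt (EX (margY PXY) (fun y => b y ^ 2))) := by
            rw [Real.sqrt_mul (sq_nonneg ψ), Real.sqrt_sq hψ0, ← hcard, pow_succ]
            ring

lemma EX_comp_zero {n : ℕ} (w : 𝒳 → ℝ) (hw1 : ∑ c, w c = 1)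
    (g : (Fin n → 𝒳) → ℝ) (hg : EX w g = 0) (T : Finset (Fin n)) :
    EX w (comp w g T) = 0 := by
  rcases T.eq_empty_or_nonempty with hT | hT
  · subst hT
    rw [EX_congr w (g' := fun _ => EX w g) (fun x => comp_empty w g x)]
    rw [EX_const w hw1, hg]
  · obtain ⟨k, hk⟩ := hT
    have h1 : EX w (Ak w k (comp w g T)) = EX w (comp w g T) := EX_Ak w hw1 k _
    have h2 : EX w (Ak w k (comp w g T)) = 0 := by
      rw [EX_congr w (g' := fun _ => 0) (fun x => Ak_comp w hw1 g T k hk x)]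
      unfold EX
      simp
    rw [← h1, h2]

/-- maximal correlation tensorizes over the components of the
decomposition: `|E[ẽ_S(Xⁿ)·f̃_S(Yⁿ)]| ≤ ψ^{|S|}·√(P_S·Q_S)`. -/
theorem maximal_correlation_tensorizes
    {𝒳 𝒴 : Type*} [Fintype 𝒳] [Fintype 𝒴] [DecidableEq 𝒳] [DecidableEq 𝒴]
    {n : ℕ} (PXY : 𝒳 × 𝒴 → ℝ)
    (hnn : ∀ p, 0 ≤ PXY p) (hsum : ∑ p : 𝒳 × 𝒴, PXY p = 1)
    (hX2 : ∃ x₁ x₂ : 𝒳, x₁ ≠ x₂ ∧ 0 < margX PXY x₁ ∧ 0 < margX PXY x₂)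
    (hY2 : ∃ y₁ y₂ : 𝒴, y₁ ≠ y₂ ∧ 0 < margY PXY y₁ ∧ 0 < margY PXY y₂)
    (ψ : ℝ) (hψ : IsLUB (corrSet PXY) ψ)
    (e : (Fin n → 𝒳) → Bool) (f : (Fin n → 𝒴) → Bool)
    (P Q : Finset (Fin n) → ℝ)
    (hP : ∀ S, P S = varX (margX PXY) (comp (margX PXY) (centered (margX PXY) e) S))
    (hQ : ∀ S, Q S = varX (margY PXY) (comp (margY PXY) (centered (margY PXY) f) S))
    (S : Finset (Fin n)) :
    |EJ PXY (fun x y => comp (margX PXY) (centered (margX PXY) e) S x *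
        comp (margY PXY) (centered (margY PXY) f) S y)|
      ≤ ψ ^ S.card * Real.sqrt (P S * Q S) := by

  classical
  haveI : Nonempty 𝒳 := ⟨hX2.choose⟩
  haveI : Nonempty 𝒴 := ⟨hY2.choose⟩
  have hψ0 : 0 ≤ ψ := psi_nonneg PXY hnn hsum hX2 hY2 hψ
  have hnnX : ∀ c, 0 ≤ margX PXY c := margX_nonneg PXY hnn
  have hnnY : ∀ d, 0 ≤ margY PXY d := margY_nonneg PXY hnn
  have hw1X : ∑ c, margX PXY c = 1 := margX_sum PXY hsum
  have hw1Y : ∑ d, margY PXY d = 1 := margY_sum PXY hsum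
  set aS := comp (margX PXY) (centered (margX PXY) e) S with haS
  set bS := comp (margY PXY) (centered (margY PXY) f) S with hbS
  -- zero-mean of the centered functions
  have hcentX : EX (margX PXY) (centered (margX PXY) e) = 0 := by
    unfold centered
    rw [EX_sub_const (margX PXY) hw1X]
    ring
  have hcentY : EX (margY PXY) (centered (margY PXY) f) = 0 := by
    unfold centered
    rw [EX_sub_const (margY PXY) hw1Y]
    ring
  -- the components have zero expectation
  have hma : EX (margX PXY) aS = 0 := EX_comp_zero (margX PXY) hw1X _ hcentX S
  have hmb : EX (margY PXY) bS = 0 := EX_comp_zero (margY PXY) hw1Y _ hcentY S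
  -- rewrite the variances
  have hPS : P S = EX (margX PXY) (fun x => aS x ^ 2) := by
    rw [hP S]
    unfold varX
    rw [← haS, hma]
    exact EX_congr _ fun x => by rw [sub_zero]
  have hQS : Q S = EX (margY PXY) (fun y => bS y ^ 2) := by
    rw [hQ S]
    unfold varX
    rw [← hbS, hmb]
    exact EX_congr _ fun y => by rw [sub_zero]
  have hPS0 : 0 ≤ P S := by rw [hPS]; exact EX_nonneg_sq _ hnnX _
  have hmain := main_bound PXY hnn hsum hψ hψ0 S aS bS
    (comp_depOn _ _ S) (comp_depOn _ _ S)
    (fun k hk x => Ak_comp (margX PXY) hw1X _ S k hk x)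
    (fun k hk y => Ak_comp (margY PXY) hw1Y _ S k hk y)
  rw [← hPS, ← hQS] at hmain
  calc |EJ PXY (fun x y => aS x * bS y)|
      ≤ ψ ^ S.card * (Real.sqrt (P S) * Real.sqrt (Q S)) := hmain
    _ = ψ ^ S.card * Real.sqrt (P S * Q S) := by rw [Real.sqrt_mul hPS0]


end BBE
end
end
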